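/- Let w be a harmonic vector field on ℝ³, homogeneous of degree k, and set u = w − Λ_k |x|² ∇(div w), where Λ_k = (λ+μ)/(2(λ(k−1)+μ(3k−2))) and λ(k−1)+μ(3k−2) ≠ 0. Then u satisfies the homogeneous elasticity system Eu := μΔu + (λ+μ)∇(div u) = 0. -/

import Mathlib

noncomputable section

/-- Partial derivative in the `i`-th coordinate direction. -/
def pd (f : (Fin 3 → ℝ) → ℝ) (i : Fin 3) (x : Fin 3 → ℝ) : ℝ :=
  fderiv ℝ f x (Pi.single i 1)

/-- Scalar Laplacian. -/
def lap (f : (Fin 3 → ℝ) → ℝ) (x : Fin 3 → ℝ) : ℝ :=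
  ∑ i : Fin 3, pd (pd f i) i x

/-- Divergence of a vector field. -/
def divg (u : (Fin 3 → ℝ) → Fin 3 → ℝ) (x : Fin 3 → ℝ) : ℝ :=
  ∑ i : Fin 3, pd (fun y => u y i) i x

/-- Lamé (elasticity) operator `Eu = μΔu + (λ+μ)∇(div u)`, componentwise. -/
def lame (lam mu : ℝ) (u : (Fin 3 → ℝ) → Fin 3 → ℝ) (x : Fin 3 → ℝ) (i : Fin 3) : ℝ :=
  mu * lap (fun y => u y i) x + (lam + mu) * pd (divg u) i x


lemma pd_congr {f g : (Fin 3 → ℝ) → ℝ} (h : ∀ x, f x = g x) (i : Fin 3) (x : Fin 3 → ℝ) :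
    pd f i x = pd g i x := by
  have : f = g := funext h
  rw [this]

lemma pd_smooth {f : (Fin 3 → ℝ) → ℝ} (hf : ContDiff ℝ (⊤ : ℕ∞) f) (i : Fin 3) :
    ContDiff ℝ (⊤ : ℕ∞) (pd f i) :=
  (hf.fderiv_right (le_refl _)).clm_apply contDiff_const

lemma pd_const (c : ℝ) (i : Fin 3) (x : Fin 3 → ℝ) : pd (fun _ => c) i x = 0 := by
  simp [pd]

lemma pd_add {f g : (Fin 3 → ℝ) → ℝ} (hf : DifferentiableAt ℝ f x) (hg : DifferentiableAt ℝ g x)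
    (i : Fin 3) : pd (fun y => f y + g y) i x = pd f i x + pd g i x := by
  simp [pd, fderiv_fun_add hf hg]

lemma pd_sub {f g : (Fin 3 → ℝ) → ℝ} (hf : DifferentiableAt ℝ f x) (hg : DifferentiableAt ℝ g x)
    (i : Fin 3) : pd (fun y => f y - g y) i x = pd f i x - pd g i x := by
  simp [pd, fderiv_fun_sub hf hg]

lemma pd_const_mul {f : (Fin 3 → ℝ) → ℝ} (hf : DifferentiableAt ℝ f x) (c : ℝ)
    (i : Fin 3) : pd (fun y => c * f y) i x = c * pd f i x := by
  simp [pd, fderiv_const_mul hf c]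

lemma pd_mul {f g : (Fin 3 → ℝ) → ℝ} (hf : DifferentiableAt ℝ f x) (hg : DifferentiableAt ℝ g x)
    (i : Fin 3) : pd (fun y => f y * g y) i x = f x * pd g i x + g x * pd f i x := by
  simp [pd, fderiv_fun_mul hf hg, smul_eq_mul]

lemma pd_sum {f : Fin 3 → (Fin 3 → ℝ) → ℝ} (hf : ∀ j, DifferentiableAt ℝ (f j) x)
    (i : Fin 3) : pd (fun y => ∑ j, f j y) i x = ∑ j, pd (f j) i x := by
  simp only [pd]
  rw [fderiv_fun_sum (fun j _ => hf j)]
  simp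

lemma pd_comm {f : (Fin 3 → ℝ) → ℝ} (hf : ContDiff ℝ (⊤ : ℕ∞) f) (i j : Fin 3) (x : Fin 3 → ℝ) :
    pd (pd f i) j x = pd (pd f j) i x := by
  have hd : ∀ y, HasFDerivAt f (fderiv ℝ f y) y := fun y =>
    (hf.differentiable (by simp) y).hasFDerivAt
  have hd2 : HasFDerivAt (fderiv ℝ f) (fderiv ℝ (fderiv ℝ f) x) x := by
    exact ((hf.fderiv_right (m := (⊤ : ℕ∞)) (le_refl _)).differentiable (by simp) x).hasFDerivAt
  have hsymm := second_derivative_symmetric hd hd2 (Pi.single i 1) (Pi.single j 1)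
  have key : ∀ a b : Fin 3, pd (pd f a) b x
      = fderiv ℝ (fderiv ℝ f) x (Pi.single b 1) (Pi.single a 1) := by
    intro a b
    have : pd (pd f a) b x = fderiv ℝ (fun y => (fderiv ℝ f y) (Pi.single a 1)) x
        (Pi.single b 1) := rfl
    rw [this, fderiv_clm_apply ((hf.fderiv_right (m := (⊤ : ℕ∞)) (le_refl _)).differentiable (by simp) x)
      (differentiableAt_const _)]
    simp
  rw [key i j, key j i, hsymm]

lemma fderiv_eq_sum {f : (Fin 3 → ℝ) → ℝ} {x : Fin 3 → ℝ} (hf : DifferentiableAt ℝ f x)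
    (v : Fin 3 → ℝ) : fderiv ℝ f x v = ∑ i, v i * pd f i x := by
  have hv : v = ∑ i, v i • (Pi.single i 1 : Fin 3 → ℝ) := by
    funext j
    simp [Finset.sum_apply, Pi.single_apply]
  conv_lhs => rw [hv]
  rw [map_sum]
  simp [pd, smul_eq_mul]

lemma pd_homog {f : (Fin 3 → ℝ) → ℝ} (hf : ContDiff ℝ (⊤ : ℕ∞) f) {k : ℤ}
    (hh : ∀ t : ℝ, 0 < t → ∀ x, f (t • x) = t ^ k * f x) (i : Fin 3) :
    ∀ t : ℝ, 0 < t → ∀ x, pd f i (t • x) = t ^ (k - 1) * pd f i x := by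
  intro t ht x
  have hd : DifferentiableAt ℝ f (t • x) := hf.differentiable (by simp) _
  have hinner : HasFDerivAt (fun y : Fin 3 → ℝ => t • y)
      (t • ContinuousLinearMap.id ℝ (Fin 3 → ℝ)) x := (hasFDerivAt_id x).const_smul t
  have hcomp := hd.hasFDerivAt.comp x hinner
  have h1 : pd (fun y => f (t • y)) i x = t * pd f i (t • x) := by
    have hcomp' : HasFDerivAt (fun y => f (t • y))
        ((fderiv ℝ f (t • x)).comp (t • ContinuousLinearMap.id ℝ (Fin 3 → ℝ))) x := hcomp
    rw [pd, hcomp'.fderiv]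
    simp [pd, smul_eq_mul]
  have h2 : pd (fun y => f (t • y)) i x = t ^ k * pd f i x := by
    have : (fun y => f (t • y)) = (fun y => t ^ k * f y) := funext (hh t ht)
    rw [this]
    simp [pd, fderiv_const_mul (hf.differentiable (by simp) x)]
  have ht' : (t : ℝ) ≠ 0 := ne_of_gt ht
  have : t * pd f i (t • x) = t ^ k * pd f i x := h1 ▸ h2
  have hz : t ^ k = t * t ^ (k - 1) := by
    rw [← zpow_one_add₀ ht']; ring_nf
  rw [hz, mul_assoc] at this
  exact mul_left_cancel₀ ht' this

lemma euler {f : (Fin 3 → ℝ) → ℝ} (hf : ContDiff ℝ (⊤ : ℕ∞) f) {k : ℤ}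
    (hh : ∀ t : ℝ, 0 < t → ∀ x, f (t • x) = t ^ k * f x) (x : Fin 3 → ℝ) :
    ∑ i, x i * pd f i x = (k : ℝ) * f x := by
  have hx : HasDerivAt (fun s : ℝ => s • x) x 1 := by
    simpa using (hasDerivAt_id (1 : ℝ)).smul_const x
  have h1 : HasDerivAt (fun s : ℝ => f (s • x)) (fderiv ℝ f x x) 1 := by
    have := (hf.differentiable (by simp) ((1 : ℝ) • x)).hasFDerivAt.comp_hasDerivAt 1 hx
    simpa [Function.comp_def] using this
  have heq : (fun s : ℝ => f (s • x)) =ᶠ[nhds 1] fun s : ℝ => s ^ k * f x := by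
    filter_upwards [Ioi_mem_nhds (zero_lt_one)] with s hs using hh s hs x
  have h1' : HasDerivAt (fun s : ℝ => s ^ k * f x) (fderiv ℝ f x x) 1 :=
    h1.congr_of_eventuallyEq heq.symm
  have h2 : HasDerivAt (fun s : ℝ => s ^ k * f x) ((k : ℝ) * f x) 1 := by
    have := (hasDerivAt_zpow k 1 (Or.inl one_ne_zero)).mul_const (f x)
    simpa using this
  have := h1'.unique h2
  rw [← this, fderiv_eq_sum (hf.differentiable (by simp) x)]

lemma q_smooth : ContDiff ℝ (⊤ : ℕ∞) (fun y : Fin 3 → ℝ => ∑ j, (y j) ^ 2) := by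
  apply ContDiff.sum
  intro j _
  exact ((ContinuousLinearMap.proj j : (Fin 3 → ℝ) →L[ℝ] ℝ).contDiff).pow 2

lemma pd_q (i : Fin 3) (x : Fin 3 → ℝ) :
    pd (fun y : Fin 3 → ℝ => ∑ j, (y j) ^ 2) i x = 2 * x i := by
  have h : ∀ j : Fin 3, HasFDerivAt (fun y : Fin 3 → ℝ => (y j) ^ 2)
      (x j • (ContinuousLinearMap.proj j : (Fin 3 → ℝ) →L[ℝ] ℝ)
        + x j • (ContinuousLinearMap.proj j : (Fin 3 → ℝ) →L[ℝ] ℝ)) x := by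
    intro j
    have hp := (ContinuousLinearMap.proj j : (Fin 3 → ℝ) →L[ℝ] ℝ).hasFDerivAt (x := x)
    have h2 : (fun y : Fin 3 → ℝ => (y j) ^ 2) = fun y : Fin 3 → ℝ => y j * y j := by
      funext y; ring
    rw [h2]
    exact hp.mul hp
  have hsum := HasFDerivAt.fun_sum (fun j (_ : j ∈ Finset.univ) => h j)
  rw [pd, hsum.fderiv]
  simp only [ContinuousLinearMap.add_apply, ContinuousLinearMap.coe_sum',
    Finset.sum_apply, ContinuousLinearMap.coe_smul', Pi.smul_apply,
    ContinuousLinearMap.proj_apply, Pi.single_apply, smul_eq_mul, mul_ite, mul_one, mul_zero]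
  rw [show (fun x_1 : Fin 3 => ((if x_1 = i then x x_1 else 0) + if x_1 = i then x x_1 else 0))
      = fun x_1 : Fin 3 => (if x_1 = i then x x_1 + x x_1 else 0) from by
    funext x_1; split <;> simp]
  rw [Finset.sum_ite_eq' Finset.univ i (fun j => x j + x j)]
  simp; ring

lemma lap_q (x : Fin 3 → ℝ) : lap (fun y : Fin 3 → ℝ => ∑ j, (y j) ^ 2) x = 6 := by
  unfold lap
  have h : ∀ i : Fin 3, pd (pd (fun y : Fin 3 → ℝ => ∑ j, (y j) ^ 2) i) i x = 2 := by
    intro i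
    have h1 : pd (pd (fun y : Fin 3 → ℝ => ∑ j, (y j) ^ 2) i) i x
        = pd (fun y : Fin 3 → ℝ => 2 * y i) i x := pd_congr (fun y => pd_q i y) i x
    rw [h1]
    have hdiff : DifferentiableAt ℝ (fun y : Fin 3 → ℝ => y i) x :=
      (ContinuousLinearMap.proj i : (Fin 3 → ℝ) →L[ℝ] ℝ).differentiableAt
    rw [pd_const_mul hdiff 2 i]
    have : pd (fun y : Fin 3 → ℝ => y i) i x = 1 := by
      have hp : HasFDerivAt (fun y : Fin 3 → ℝ => y i)
          (ContinuousLinearMap.proj i : (Fin 3 → ℝ) →L[ℝ] ℝ) x :=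
        (ContinuousLinearMap.proj i : (Fin 3 → ℝ) →L[ℝ] ℝ).hasFDerivAt
      rw [pd, hp.fderiv]
      simp
    rw [this]; ring
  simp [h]; norm_num

lemma lap_congr {f g : (Fin 3 → ℝ) → ℝ} (h : ∀ x, f x = g x) (x : Fin 3 → ℝ) :
    lap f x = lap g x := by
  have : f = g := funext h
  rw [this]

lemma lap_sub {f g : (Fin 3 → ℝ) → ℝ} (hf : ContDiff ℝ (⊤ : ℕ∞) f) (hg : ContDiff ℝ (⊤ : ℕ∞) g)
    (x : Fin 3 → ℝ) : lap (fun y => f y - g y) x = lap f x - lap g x := by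
  unfold lap
  rw [← Finset.sum_sub_distrib]
  refine Finset.sum_congr rfl (fun i _ => ?_)
  have h1 : ∀ y, pd (fun z => f z - g z) i y = pd f i y - pd g i y := fun y =>
    pd_sub (hf.differentiable (by simp) y) (hg.differentiable (by simp) y) i
  rw [pd_congr h1]
  exact pd_sub ((pd_smooth hf i).differentiable (by simp) x)
    ((pd_smooth hg i).differentiable (by simp) x) i

lemma lap_const_mul {f : (Fin 3 → ℝ) → ℝ} (hf : ContDiff ℝ (⊤ : ℕ∞) f) (c : ℝ)
    (x : Fin 3 → ℝ) : lap (fun y => c * f y) x = c * lap f x := by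
  unfold lap
  rw [Finset.mul_sum]
  refine Finset.sum_congr rfl (fun i _ => ?_)
  have h1 : ∀ y, pd (fun z => c * f z) i y = c * pd f i y := fun y =>
    pd_const_mul (hf.differentiable (by simp) y) c i
  rw [pd_congr h1]
  exact pd_const_mul ((pd_smooth hf i).differentiable (by simp) x) c i

lemma lap_mul {f g : (Fin 3 → ℝ) → ℝ} (hf : ContDiff ℝ (⊤ : ℕ∞) f) (hg : ContDiff ℝ (⊤ : ℕ∞) g)
    (x : Fin 3 → ℝ) : lap (fun y => f y * g y) x
      = lap f x * g x + 2 * (∑ j, pd f j x * pd g j x) + f x * lap g x := by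
  have key : ∀ i : Fin 3, pd (pd (fun y => f y * g y) i) i x
      = pd (pd f i) i x * g x + 2 * (pd f i x * pd g i x) + f x * pd (pd g i) i x := by
    intro i
    have h1 : ∀ y, pd (fun z => f z * g z) i y = f y * pd g i y + g y * pd f i y := fun y =>
      pd_mul (hf.differentiable (by simp) y) (hg.differentiable (by simp) y) i
    rw [pd_congr h1]
    have hfd := hf.differentiable (by simp) x
    have hgd := hg.differentiable (by simp) x
    have hpf := (pd_smooth hf i).differentiable (by simp) x
    have hpg := (pd_smooth hg i).differentiable (by simp) x
    rw [pd_add (hfd.fun_mul hpg) (hgd.fun_mul hpf) i, pd_mul hfd hpg i, pd_mul hgd hpf i]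
    ring
  unfold lap
  rw [Finset.sum_congr rfl (fun i _ => key i)]
  rw [Finset.sum_add_distrib, Finset.sum_add_distrib, ← Finset.sum_mul, ← Finset.mul_sum,
    ← Finset.mul_sum]

lemma lap_pd {f : (Fin 3 → ℝ) → ℝ} (hf : ContDiff ℝ (⊤ : ℕ∞) f) (j : Fin 3) (x : Fin 3 → ℝ) :
    lap (pd f j) x = pd (lap f) j x := by
  unfold lap
  have step : ∀ i : Fin 3, pd (pd (pd f j) i) i x = pd (pd (pd f i) i) j x := by
    intro i
    have h1 : ∀ y, pd (pd f j) i y = pd (pd f i) j y := fun y => pd_comm hf j i y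
    rw [pd_congr h1]
    exact pd_comm (pd_smooth hf i) j i x
  rw [Finset.sum_congr rfl (fun i _ => step i)]
  have hsum : ∀ y, (∑ i : Fin 3, pd (pd f i) i y) = lap f y := fun y => rfl
  rw [show (∑ i : Fin 3, pd (pd (pd f i) i) j x) = pd (fun y => ∑ i : Fin 3, pd (pd f i) i y) j x
    from (pd_sum (fun i => (pd_smooth (pd_smooth hf i) i).differentiable (by simp) x) j).symm]

/-- if `w` is a smooth harmonic vector field homogeneous of degree `k`
and `u = w − Λ_k |x|² ∇(div w)` with `Λ_k = (λ+μ)/(2(λ(k−1)+μ(3k−2))) ≠ 0` denominator,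
then `Eu = 0`. -/
theorem stmt2 (lam mu : ℝ) (hmu : 0 < mu) (hlm : 0 < 3 * lam + 2 * mu)
    (k : ℤ) (hk : lam * ((k : ℝ) - 1) + mu * (3 * (k : ℝ) - 2) ≠ 0)
    (w : (Fin 3 → ℝ) → Fin 3 → ℝ)
    (hsmooth : ∀ i, ContDiff ℝ (⊤ : ℕ∞) (fun x => w x i))
    (hharm : ∀ i x, lap (fun y => w y i) x = 0)
    (hhom : ∀ t : ℝ, 0 < t → ∀ x, w (t • x) = (t ^ k) • w x)
    (u : (Fin 3 → ℝ) → Fin 3 → ℝ)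
    (hu : ∀ x i, u x i = w x i -
      (lam + mu) / (2 * (lam * ((k : ℝ) - 1) + mu * (3 * (k : ℝ) - 2))) *
        ((∑ j, (x j) ^ 2) * pd (divg w) i x)) :
    ∀ x i, lame lam mu u x i = 0 := by
  set L : ℝ := (lam + mu) / (2 * (lam * ((k : ℝ) - 1) + mu * (3 * (k : ℝ) - 2))) with hL
  -- component homogeneity
  have hcomp : ∀ j, ∀ t : ℝ, 0 < t → ∀ x, (fun y => w y j) (t • x) = t ^ k * (fun y => w y j) x := by
    intro j t ht x
    simp only [hhom t ht x, Pi.smul_apply, smul_eq_mul]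
  -- divergence of w
  have hdeq : divg w = fun x => ∑ j, pd (fun y => w y j) j x := rfl
  have hds : ContDiff ℝ (⊤ : ℕ∞) (divg w) := by
    rw [hdeq]; exact ContDiff.sum (fun j _ => pd_smooth (hsmooth j) j)
  have hd_hom : ∀ t : ℝ, 0 < t → ∀ x, divg w (t • x) = t ^ (k - 1) * divg w x := by
    intro t ht x
    show (∑ j, pd (fun y => w y j) j (t • x)) = t ^ (k - 1) * ∑ j, pd (fun y => w y j) j x
    rw [Finset.mul_sum]
    exact Finset.sum_congr rfl (fun j _ => pd_homog (hsmooth j) (hcomp j) j t ht x)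
  have hd_harm : ∀ x, lap (divg w) x = 0 := by
    intro x
    show (∑ i : Fin 3, pd (pd (divg w) i) i x) = 0
    have step1 : ∀ i, pd (pd (divg w) i) i x
        = ∑ j, pd (pd (pd (fun y => w y j) j) i) i x := by
      intro i
      have h1 : ∀ y, pd (divg w) i y = ∑ j, pd (pd (fun z => w z j) j) i y := by
        intro y
        rw [hdeq]
        exact pd_sum (fun j => (pd_smooth (hsmooth j) j).differentiable (by simp) y) i
      rw [pd_congr h1]
      exact pd_sum (fun j => (pd_smooth (pd_smooth (hsmooth j) j) i).differentiable (by simp) x) i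
    rw [Finset.sum_congr rfl (fun i _ => step1 i), Finset.sum_comm]
    have step2 : ∀ j : Fin 3, (∑ i : Fin 3, pd (pd (pd (fun y => w y j) j) i) i x) = 0 := by
      intro j
      have : (∑ i : Fin 3, pd (pd (pd (fun y => w y j) j) i) i x)
          = lap (pd (fun y => w y j) j) x := rfl
      rw [this, lap_pd (hsmooth j) j x, pd_congr (hharm j), pd_const]
    rw [Finset.sum_congr rfl (fun j _ => step2 j)]
    simp
  -- Euler identities
  have eulerd : ∀ y, ∑ j, y j * pd (divg w) j y = ((k : ℝ) - 1) * divg w y := by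
    intro y
    have := euler hds hd_hom y
    push_cast at this
    convert this using 2
  have eulerv : ∀ i x, ∑ j, x j * pd (pd (divg w) i) j x
      = ((k : ℝ) - 2) * pd (divg w) i x := by
    intro i x
    have hhv := pd_homog hds hd_hom i
    have := euler (pd_smooth hds i) hhv x
    push_cast at this
    convert this using 2
    ring
  -- v harmonic
  have hv_harm : ∀ i x, lap (pd (divg w) i) x = 0 := by
    intro i x
    rw [lap_pd hds i x, pd_congr hd_harm, pd_const]
  -- u components
  have hqv_smooth : ∀ i, ContDiff ℝ (⊤ : ℕ∞) (fun y : Fin 3 → ℝ => (∑ j, (y j) ^ 2) * pd (divg w) i y) :=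
    fun i => q_smooth.mul (pd_smooth hds i)
  have hueq : ∀ i, (fun y => u y i)
      = fun y => w y i - L * ((∑ j, (y j) ^ 2) * pd (divg w) i y) :=
    fun i => funext (fun y => hu y i)
  intro x i
  -- Laplacian of u_i
  have hlap_u : lap (fun y => u y i) x
      = - (L * ((4 * (k : ℝ) - 2) * pd (divg w) i x)) := by
    rw [hueq i, lap_sub (hsmooth i) (contDiff_const.mul (hqv_smooth i)) x,
      hharm i x, lap_const_mul (hqv_smooth i) L x,
      lap_mul q_smooth (pd_smooth hds i) x, lap_q, hv_harm i x]
    have hsum2 : (∑ j, pd (fun y : Fin 3 → ℝ => ∑ m, (y m) ^ 2) j x * pd (pd (divg w) i) j x)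
        = 2 * (((k : ℝ) - 2) * pd (divg w) i x) := by
      rw [Finset.sum_congr rfl (fun j _ => by rw [pd_q j x]),
        show (∑ j, 2 * x j * pd (pd (divg w) i) j x)
          = 2 * ∑ j, x j * pd (pd (divg w) i) j x from by
            rw [Finset.mul_sum]; exact Finset.sum_congr rfl (fun j _ => by ring),
        eulerv i x]
    rw [hsum2]
    ring
  -- divergence of u
  have hdivu : ∀ y, divg u y = (1 - 2 * L * ((k : ℝ) - 1)) * divg w y := by
    intro y
    show (∑ j, pd (fun z => u z j) j y) = _
    have hterm : ∀ j, pd (fun z => u z j) j y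
        = pd (fun z => w z j) j y - L * (2 * y j * pd (divg w) j y
            + (∑ m, (y m) ^ 2) * pd (pd (divg w) j) j y) := by
      intro j
      rw [hueq j,
        pd_sub ((hsmooth j).differentiable (by simp) y)
          ((contDiff_const.mul (hqv_smooth j)).differentiable (by simp) y) j,
        pd_const_mul ((hqv_smooth j).differentiable (by simp) y) L j,
        pd_mul (q_smooth.differentiable (by simp) y) ((pd_smooth hds j).differentiable (by simp) y) j,
        pd_q]
      ring
    rw [Finset.sum_congr rfl (fun j _ => hterm j), Finset.sum_sub_distrib, ← Finset.mul_sum]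
    have e2 : (∑ j : Fin 3, pd (pd (divg w) j) j y) = lap (divg w) y := rfl
    have hB : (∑ j, (2 * y j * pd (divg w) j y + (∑ m, (y m) ^ 2) * pd (pd (divg w) j) j y))
        = 2 * (((k : ℝ) - 1) * divg w y) := by
      rw [Finset.sum_add_distrib, ← Finset.mul_sum, e2, hd_harm y, mul_zero, add_zero,
        show (∑ j, 2 * y j * pd (divg w) j y) = 2 * ∑ j, y j * pd (divg w) j y from by
          rw [Finset.mul_sum]; exact Finset.sum_congr rfl (fun j _ => by ring),
        eulerd y]
    rw [hB]
    show divg w y - L * (2 * (((k : ℝ) - 1) * divg w y)) = _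
    ring
  have hpddivu : pd (divg u) i x = (1 - 2 * L * ((k : ℝ) - 1)) * pd (divg w) i x := by
    rw [pd_congr hdivu i x, pd_const_mul (hds.differentiable (by simp) x) _ i]
  show mu * lap (fun y => u y i) x + (lam + mu) * pd (divg u) i x = 0
  rw [hlap_u, hpddivu, hL]
  have h2D : 2 * (lam * ((k : ℝ) - 1) + mu * (3 * (k : ℝ) - 2)) *
      (2 * (lam * ((k : ℝ) - 1) + mu * (3 * (k : ℝ) - 2)))⁻¹ = 1 :=
    mul_inv_cancel₀ (mul_ne_zero two_ne_zero hk)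
  linear_combination (-(pd (divg w) i x) * (lam + mu)) * h2D
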